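/- Let R be a local ring and {(a_i,b_i) : i ∈ I} a descending chain of right coprime pairs (indexed by a linear order I, with a_jR ⊆ a_iR, b_jR ⊆ b_iR for i ≤ j). Then either (1,0) or (0,1) is a lower bound of the chain; in particular every descending chain of right coprime pairs in a local ring has a minimal lower bound. -/
import Mathlib


/-- The cyclic right ideal `aR`, as a submodule of `R` over `Rᵐᵒᵖ`. -/
def rspan (R : Type*) [Ring R] (a : R) : Submodule Rᵐᵒᵖ R := Submodule.span Rᵐᵒᵖ {a}

lemma mem_rspan_iff {R : Type*} [Ring R] {c x : R} : x ∈ rspan R c ↔ ∃ t, c * t = x := by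
  rw [rspan, Submodule.mem_span_singleton]
  constructor
  · rintro ⟨r, rfl⟩
    exact ⟨r.unop, by rw [← MulOpposite.smul_eq_mul_unop]⟩
  · rintro ⟨t, rfl⟩
    exact ⟨MulOpposite.op t, by simp [MulOpposite.smul_eq_mul_unop]⟩

/-- In a local ring, a right-invertible element is a unit. -/
lemma isUnit_of_mul_eq_one_local {R : Type*} [Ring R] [IsLocalRing R] {x y : R}
    (h : x * y = 1) : IsUnit x := by
  rcases IsLocalRing.isUnit_or_isUnit_of_add_one (a := y * x) (b := 1 - y * x) (by abel) with
    hu | hu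
  · rcases hu with ⟨u, hu⟩
    have hyx : (↑u⁻¹ * y) * x = 1 := by
      rw [mul_assoc, ← hu, Units.inv_mul]
    have heq : (↑u⁻¹ * y : R) = y := left_inv_eq_right_inv hyx h
    rw [heq] at hyx
    exact ⟨⟨x, y, h, hyx⟩, rfl⟩
  · exfalso
    rcases hu with ⟨u, hu⟩
    have hx0 : x * (1 - y * x) = 0 := by
      have : x * (y * x) = x := by rw [← mul_assoc, h, one_mul]
      rw [mul_sub, mul_one, this, sub_self]
    have : x = 0 := by
      calc x = x * ((1 - y * x) * ↑u⁻¹) := by rw [← hu, Units.mul_inv, mul_one]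
        _ = (x * (1 - y * x)) * ↑u⁻¹ := by rw [mul_assoc]
        _ = 0 := by rw [hx0, zero_mul]
    rw [this, zero_mul] at h
    exact zero_ne_one h

lemma rspan_le_of_isUnit {R : Type*} [Ring R] {c : R} (hc : IsUnit c) (x : R) :
    rspan R x ≤ rspan R c := by
  rcases hc with ⟨u, rfl⟩
  intro z _
  exact mem_rspan_iff.mpr ⟨↑u⁻¹ * z, by rw [← mul_assoc, Units.mul_inv, one_mul]⟩

lemma rspan_zero_le {R : Type*} [Ring R] (c : R) : rspan R (0 : R) ≤ rspan R c := by
  intro z hz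
  rcases mem_rspan_iff.mp hz with ⟨t, ht⟩
  rw [zero_mul] at ht
  exact ht ▸ (rspan R c).zero_mem

/-- In a local ring, for every descending chain of right coprime pairs, either `(1,0)`
or `(0,1)` is a lower bound (i.e. all the `aᵢ` are units, or all the `bᵢ` are units);
in particular the chain has a minimal lower bound `(e, 1-e)` with `e` idempotent. -/
theorem local_chain_has_minimal_lowerBound {R I : Type*} [Ring R] [IsLocalRing R]
    [LinearOrder I] (a b : I → R)
    (hcop : ∀ i, ∃ r s : R, a i * r + b i * s = 1)
    (hdesc : ∀ i j, i ≤ j → rspan R (a j) ≤ rspan R (a i) ∧ rspan R (b j) ≤ rspan R (b i)) :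
    ((∀ i, IsUnit (a i)) ∨ (∀ i, IsUnit (b i))) ∧
      ∃ e : R, IsIdempotentElem e ∧
        ∀ i, rspan R e ≤ rspan R (a i) ∧ rspan R (1 - e) ≤ rspan R (b i) := by
  -- For each i, either `a i` or `b i` is a unit.
  have key : ∀ i, IsUnit (a i) ∨ IsUnit (b i) := by
    intro i
    rcases hcop i with ⟨r, s, hrs⟩
    rcases IsLocalRing.isUnit_or_isUnit_of_add_one hrs with h | h
    · rcases h.exists_right_inv with ⟨v, hv⟩
      rw [mul_assoc] at hv
      exact Or.inl (isUnit_of_mul_eq_one_local hv)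
    · rcases h.exists_right_inv with ⟨v, hv⟩
      rw [mul_assoc] at hv
      exact Or.inr (isUnit_of_mul_eq_one_local hv)
  have main : (∀ i, IsUnit (a i)) ∨ (∀ i, IsUnit (b i)) := by
    by_cases ha : ∀ i, IsUnit (a i)
    · exact Or.inl ha
    · push_neg at ha
      rcases ha with ⟨i, hai⟩
      have hbi : IsUnit (b i) := (key i).resolve_left hai
      refine Or.inr fun j => ?_
      by_contra hbj
      have haj : IsUnit (a j) := (key j).resolve_right hbj
      rcases le_total i j with hij | hij
      · -- a j ∈ a i R, a j unit ⇒ a i right invertible ⇒ unit, contradiction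
        have : a j ∈ rspan R (a i) :=
          (hdesc i j hij).1 (mem_rspan_iff.mpr ⟨1, mul_one _⟩)
        rcases mem_rspan_iff.mp this with ⟨t, ht⟩
        rcases haj.exists_right_inv with ⟨v, hv⟩
        exact hai (isUnit_of_mul_eq_one_local (x := a i) (y := t * v)
          (by rw [← mul_assoc, ht, hv]))
      · -- b i ∈ b j R, b i unit ⇒ b j right invertible ⇒ unit, contradiction
        have : b i ∈ rspan R (b j) :=
          (hdesc j i hij).2 (mem_rspan_iff.mpr ⟨1, mul_one _⟩)
        rcases mem_rspan_iff.mp this with ⟨t, ht⟩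
        rcases hbi.exists_right_inv with ⟨v, hv⟩
        exact hbj (isUnit_of_mul_eq_one_local (x := b j) (y := t * v)
          (by rw [← mul_assoc, ht, hv]))
  refine ⟨main, ?_⟩
  rcases main with h | h
  · exact ⟨1, IsIdempotentElem.one, fun i =>
      ⟨rspan_le_of_isUnit (h i) 1, by simpa using rspan_zero_le (b i)⟩⟩
  · exact ⟨0, IsIdempotentElem.zero, fun i =>
      ⟨rspan_zero_le (a i), by simpa using rspan_le_of_isUnit (h i) 1⟩⟩
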